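/- arXiv:1409.5699 — 2 statements merged into one kernel-verified Lean document; each statement's English description precedes it below -/
import Mathlib

section
/- iGL is closed under the box translation: for every modal proposition A, if iGL ⊢ A then iGL ⊢ A^□. -/
namespace PLHA

/-! ## Modal propositional language -/

/-- Modal propositional formulas: atomic variables, ⊥, ∧, ∨, →, □. -/
inductive Form : Type
  | var : ℕ → Form
  | bot : Form
  | and : Form → Form → Form
  | or  : Form → Form → Form
  | imp : Form → Form → Form
  | box : Form → Form
  deriving DecidableEq

namespace Form

/-- ⊤ -/
def top : Form := imp bot bot

/-- A ↔ B -/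
def iffF (A B : Form) : Form := and (imp A B) (imp B A)

/-- ⊡A := A ∧ □A -/
def boxdot (A : Form) : Form := and A (box A)

/-- `A ∈ NOI`: every occurrence of → is in the scope of some □. -/
def noi : Form → Bool
  | var _ => true
  | bot => true
  | and A B => noi A && noi B
  | or A B => noi A && noi B
  | imp _ _ => false
  | box _ => true

/-- The Leivant translation `A^l`. -/
def lev : Form → Form
  | var n => var n
  | bot => bot
  | and A B => and (lev A) (lev B)
  | or A B => or (boxdot (lev A)) (boxdot (lev B))
  | imp A B => if noi A then imp A (lev B) else imp A B
  | box A => box A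

/-- atomic propositions: atomic variables and ⊥. -/
def isAtom (A : Form) : Prop := (∃ n, A = var n) ∨ A = bot

/-- boxed propositions. -/
def isBoxed (A : Form) : Prop := ∃ B, A = box B

/-- non-modal (□-free) propositions. -/
def boxFree : Form → Bool
  | var _ => true
  | bot => true
  | and A B => boxFree A && boxFree B
  | or A B => boxFree A && boxFree B
  | imp A B => boxFree A && boxFree B
  | box _ => false

/-- A bound on the indices of the variables occurring in a formula. -/
def fvb : Form → ℕ
  | var n => n + 1
  | bot => 0
  | and A B => max (fvb A) (fvb B)
  | or A B => max (fvb A) (fvb B)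
  | imp A B => max (fvb A) (fvb B)
  | box A => fvb A

/-- maximal nesting depth of boxes. -/
def bdep : Form → ℕ
  | var _ => 0
  | bot => 0
  | and A B => max (bdep A) (bdep B)
  | or A B => max (bdep A) (bdep B)
  | imp A B => max (bdep A) (bdep B)
  | box A => bdep A + 1

/-- the complexity measure ρ used to define NNIL. -/
def rho : Form → ℕ
  | var _ => 0
  | bot => 0
  | and A B => max (rho A) (rho B)
  | or A B => max (rho A) (rho B)
  | imp A B => max (rho A + 1) (rho B)
  | box _ => 0

end Form

/-- NNIL: no nested implications to the left. -/
def NNILc (A : Form) : Prop := Form.rho A ≤ 1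

/-- TNNIL: thoroughly NNIL propositions. -/
inductive TNNIL : Form → Prop
  | var (n : ℕ) : TNNIL (.var n)
  | bot : TNNIL .bot
  | and {A B} : TNNIL A → TNNIL B → TNNIL (.and A B)
  | or {A B} : TNNIL A → TNNIL B → TNNIL (.or A B)
  | box {A} : TNNIL A → TNNIL (.box A)
  | imp {A B} : A.noi = true → TNNIL A → TNNIL B → TNNIL (.imp A B)

/-- TNNIL⁻: propositions of the form B(□C₁,…,□Cₙ) with B non-modal and Cᵢ ∈ TNNIL. -/
inductive TNNILminus : Form → Prop
  | var (n : ℕ) : TNNILminus (.var n)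
  | bot : TNNILminus .bot
  | box {A} : TNNIL A → TNNILminus (.box A)
  | and {A B} : TNNILminus A → TNNILminus B → TNNILminus (.and A B)
  | or {A B} : TNNILminus A → TNNILminus B → TNNILminus (.or A B)
  | imp {A B} : TNNILminus A → TNNILminus B → TNNILminus (.imp A B)

/-! ## Proof systems -/

/-- Hilbert-style axioms of intuitionistic propositional logic (over the modal language). -/
inductive IpcAx : Form → Prop
  | a1 (A B) : IpcAx (.imp A (.imp B A))
  | a2 (A B C) : IpcAx (.imp (.imp A (.imp B C)) (.imp (.imp A B) (.imp A C)))
  | a3 (A B) : IpcAx (.imp A (.imp B (.and A B)))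
  | a4 (A B) : IpcAx (.imp (.and A B) A)
  | a5 (A B) : IpcAx (.imp (.and A B) B)
  | a6 (A B) : IpcAx (.imp A (.or A B))
  | a7 (A B) : IpcAx (.imp B (.or A B))
  | a8 (A B C) : IpcAx (.imp (.imp A C) (.imp (.imp B C) (.imp (.or A B) C)))
  | a9 (A) : IpcAx (.imp .bot A)

/-- Derivability from IPC axioms together with extra axioms `Ax`, modus ponens,
and (if `useNec = true`) the necessitation rule. -/
inductive Proves (Ax : Form → Prop) (useNec : Bool) : Form → Prop
  | ax {A} : Ax A → Proves Ax useNec A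
  | ipc {A} : IpcAx A → Proves Ax useNec A
  | mp {A B} : Proves Ax useNec (.imp A B) → Proves Ax useNec A → Proves Ax useNec B
  | nec {A} : useNec = true → Proves Ax useNec A → Proves Ax useNec (.box A)

/-- K and 4 axiom schemas. -/
inductive K4Ax : Form → Prop
  | k (A B) : K4Ax (.imp (.box (.imp A B)) (.imp (.box A) (.box B)))
  | four (A) : K4Ax (.imp (.box A) (.box (.box A)))

/-- K, 4, and Löb's axiom schemas. -/
inductive GLAx : Form → Prop
  | k (A B) : GLAx (.imp (.box (.imp A B)) (.imp (.box A) (.box B)))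
  | four (A) : GLAx (.imp (.box A) (.box (.box A)))
  | lob (A) : GLAx (.imp (.box (.imp (.box A) A)) (.box A))

/-- IPC_□ : intuitionistic propositional logic over the modal language. -/
def IPCbProves : Form → Prop := Proves (fun _ => False) false

/-- iK4. -/
def iK4Proves : Form → Prop := Proves K4Ax true

/-- iGL. -/
def iGLProves : Form → Prop := Proves GLAx true

/-- the completeness principle CP : A → □A. -/
def CPAx : Form → Prop := fun F => ∃ A : Form, F = .imp A (.box A)

/-- LC := iGL + CP. -/
def LCProves : Form → Prop := Proves (fun F => GLAx F ∨ CPAx F) true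

/-- CP restricted to atomic propositions. -/
def CPaAx : Form → Prop := fun F => ∃ A : Form, A.isAtom ∧ F = .imp A (.box A)

/-- the extended Leivant principle Le⁺ : □A → □A^l. -/
def LeplusAx : Form → Prop := fun F => ∃ A : Form, F = .imp (.box A) (.box A.lev)

/-- LLe⁺ := iGL + Le⁺ + CP_a. -/
def LLeplusProves : Form → Prop := Proves (fun F => GLAx F ∨ LeplusAx F ∨ CPaAx F) true

/-! ## The preservativity relation ▶ -/

/-- the bracket operation [A]B. -/
def bracket (A : Form) : Form → Form
  | .and B C => .and (bracket A B) (bracket A C)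
  | .or B C => .or (bracket A B) (bracket A C)
  | .imp B C => .imp A (.imp B C)
  | B => B

def listConj : List Form → Form
  | [] => Form.top
  | [A] => A
  | A :: l => .and A (listConj l)

def listDisj : List Form → Form
  | [] => Form.bot
  | [A] => A
  | A :: l => .or A (listDisj l)

/-- the relation ▶ : the smallest relation satisfying A1–A4 and B1–B3.
In B2 a (finite) set of implications is represented by a list `X` of pairs `(E, F)`
standing for the implications `E → F`. -/
inductive Pres : Form → Form → Prop
  | a1 {A B} : iK4Proves (.imp A B) → Pres A B
  | a2 {A B C} : Pres A B → Pres B C → Pres A C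
  | a3 {A B C} : Pres C A → Pres C B → Pres C (.and A B)
  | a4 {A B} : Pres A B → Pres (.box A) (.box B)
  | b1 {A B C} : Pres A C → Pres B C → Pres (.or A B) C
  | b2 (X : List (Form × Form)) (C : Form) :
      Pres (.imp (listConj (X.map fun p => Form.imp p.1 p.2)) C)
        (listDisj ((X.map Prod.fst ++ [C]).map
          (bracket (listConj (X.map fun p => Form.imp p.1 p.2)))))
  | b3 {A B C} : Pres A B → (C.isAtom ∨ C.isBoxed) → Pres (.imp C A) (.imp C B)

/-- the axioms of H_σ : LLe⁺ + CP_a + {□A→□B : A ▶ B}. -/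
def HsigmaAx : Form → Prop := fun F =>
  GLAx F ∨ LeplusAx F ∨ CPaAx F ∨ ∃ A B : Form, Pres A B ∧ F = .imp (.box A) (.box B)

/-- H_σ. -/
def HsigmaProves : Form → Prop := Proves HsigmaAx true

/-! ## NNIL/TNNIL approximations -/

/-- `star` is (a realization of) Visser's NNIL-algorithm: `star A` is the best NNIL
approximation of `A` from below. -/
def IsNNILApproxOp (star : Form → Form) : Prop :=
  ∀ A : Form, NNILc (star A) ∧ IPCbProves (.imp (star A) A) ∧
    ∀ B : Form, NNILc B → IPCbProves (.imp B A) → IPCbProves (.imp B (star A))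

/-- replace the outermost boxed subformulas of a formula by the fresh variables
`k, k+1, …` (left to right), returning the resulting non-modal skeleton together
with the list of bodies of removed boxes. -/
def strip : Form → ℕ → Form × List Form
  | .var n, _ => (.var n, [])
  | .bot, _ => (.bot, [])
  | .and A B, k =>
      let pa := strip A k
      let pb := strip B (k + pa.2.length)
      (.and pa.1 pb.1, pa.2 ++ pb.2)
  | .or A B, k =>
      let pa := strip A k
      let pb := strip B (k + pa.2.length)
      (.or pa.1 pb.1, pa.2 ++ pb.2)
  | .imp A B, k =>
      let pa := strip A k
      let pb := strip B (k + pa.2.length)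
      (.imp pa.1 pb.1, pa.2 ++ pb.2)
  | .box A, k => (.var k, [A])

/-- simultaneous substitution of formulas for variables. -/
def substF (f : ℕ → Form) : Form → Form
  | .var n => f n
  | .bot => .bot
  | .and A B => .and (substF f A) (substF f B)
  | .or A B => .or (substF f A) (substF f B)
  | .imp A B => .imp (substF f A) (substF f B)
  | .box A => .box (substF f A)

/-- fuelled version of the TNNIL approximation `A⁺`:
`A⁺ := (A')^*[pᵢ | □Bᵢ⁺]` where `A = A'[pᵢ | □Bᵢ]` with `A'` non-modal. -/
def plusAux (star : Form → Form) : ℕ → Form → Form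
  | 0, A => A
  | fuel + 1, A =>
      let k := A.fvb
      let p := strip A k
      substF (fun n =>
        if k ≤ n ∧ n < k + p.2.length then
          .box (plusAux star fuel (p.2.getD (n - k) .bot))
        else .var n) (star p.1)

/-- the TNNIL approximation `A⁺` (relative to a realization `star` of the NNIL-algorithm). -/
def plusF (star : Form → Form) (A : Form) : Form := plusAux star (A.bdep + 1) A

/-- `A⁻`: writing `A = B(□C₁,…,□Cₙ)` with `B` non-modal, `A⁻ := B(□C₁⁺,…,□Cₙ⁺)`. -/
def minusF (star : Form → Form) (A : Form) : Form :=
  let k := A.fvb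
  let p := strip A k
  substF (fun n =>
    if k ≤ n ∧ n < k + p.2.length then
      .box (plusF star (p.2.getD (n - k) .bot))
    else .var n) p.1

/-- the box translation A^□. -/
def boxTr : Form → Form
  | .var n => Form.boxdot (.var n)
  | .bot => Form.boxdot .bot
  | .and A B => .and (boxTr A) (boxTr B)
  | .or A B => .or (boxTr A) (boxTr B)
  | .imp A B => Form.boxdot (.imp (boxTr A) (boxTr B))
  | .box A => .box (boxTr A)

/-- a Gödel numbering of modal formulas. -/
def encodeForm : Form → ℕ
  | .var n => Nat.pair 0 n
  | .bot => Nat.pair 1 0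
  | .and A B => Nat.pair 2 (Nat.pair (encodeForm A) (encodeForm B))
  | .or A B => Nat.pair 3 (Nat.pair (encodeForm A) (encodeForm B))
  | .imp A B => Nat.pair 4 (Nat.pair (encodeForm A) (encodeForm B))
  | .box A => Nat.pair 5 (encodeForm A)

/-! ## Propositional Kripke models -/

/-- Kripke models for intuitionistic modal logic. -/
structure PKripke where
  W : Type
  le : W → W → Prop
  r : W → W → Prop
  V : W → ℕ → Prop
  le_refl : ∀ w, le w w
  le_trans : ∀ {a b c}, le a b → le b c → le a c
  le_antisymm : ∀ {a b}, le a b → le b a → a = b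
  le_r : ∀ {a b c}, le a b → r b c → r a c
  mono : ∀ {a b : W} {n : ℕ}, le a b → V a n → V b n

/-- the forcing relation of a propositional modal Kripke model. -/
def pforces (M : PKripke) : Form → M.W → Prop
  | .var n, w => M.V w n
  | .bot, _ => False
  | .and A B, w => pforces M A w ∧ pforces M B w
  | .or A B, w => pforces M A w ∨ pforces M B w
  | .imp A B, w => ∀ v, M.le w v → pforces M A v → pforces M B v
  | .box A, w => ∀ v, M.r w v → pforces M A v

namespace PKripke

/-- brilliant: (R;≤) ⊆ R. -/
def Brilliant (M : PKripke) : Prop := ∀ {a b c : M.W}, M.r a b → M.le b c → M.r a c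

/-- reverse well-founded: well-founded with respect to R⁻¹. -/
def RevWF (M : PKripke) : Prop := WellFounded (fun a b : M.W => M.r b a)

/-- perfect: brilliant, reverse well-founded, and R ⊆ <. -/
def Perfect (M : PKripke) : Prop :=
  M.Brilliant ∧ M.RevWF ∧ ∀ {a b : M.W}, M.r a b → M.le a b ∧ a ≠ b

/-- the partial order (W,≤) is a tree: it has a root and the set of predecessors
of every node is linearly ordered. -/
def TreeFrame (M : PKripke) : Prop :=
  (∃ root : M.W, ∀ w, M.le root w) ∧
  ∀ w u v : M.W, M.le u w → M.le v w → (M.le u v ∨ M.le v u)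

end PKripke

/-! ## First-order arithmetic -/

/-- terms of the language (S, +, ·, <, 0) (de Bruijn variables). -/
inductive ATerm : Type
  | var : ℕ → ATerm
  | zero : ATerm
  | succ : ATerm → ATerm
  | add : ATerm → ATerm → ATerm
  | mul : ATerm → ATerm → ATerm
  deriving DecidableEq

namespace ATerm

def lift : ATerm → ℕ → ATerm
  | var n, d => if n < d then var n else var (n + 1)
  | zero, _ => zero
  | succ t, d => succ (t.lift d)
  | add t u, d => add (t.lift d) (u.lift d)
  | mul t u, d => mul (t.lift d) (u.lift d)

def subst : ATerm → ℕ → ATerm → ATerm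
  | var n, k, s => if n < k then var n else if n = k then s else var (n - 1)
  | zero, _, _ => zero
  | succ t, k, s => succ (t.subst k s)
  | add t u, k, s => add (t.subst k s) (u.subst k s)
  | mul t u, k, s => mul (t.subst k s) (u.subst k s)

/-- non-binding substitution: replace `var k` by `s`, leaving other variables alone. -/
def substId : ATerm → ℕ → ATerm → ATerm
  | var n, k, s => if n = k then s else var n
  | zero, _, _ => zero
  | succ t, k, s => succ (t.substId k s)
  | add t u, k, s => add (t.substId k s) (u.substId k s)
  | mul t u, k, s => mul (t.substId k s) (u.substId k s)

/-- all variables have index < k. -/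
def vlt : ATerm → ℕ → Prop
  | var n, k => n < k
  | zero, _ => True
  | succ t, k => t.vlt k
  | add t u, k => t.vlt k ∧ u.vlt k
  | mul t u, k => t.vlt k ∧ u.vlt k

/-- evaluation in the standard model ℕ. -/
def evalN : ATerm → (ℕ → ℕ) → ℕ
  | var n, ρ => ρ n
  | zero, _ => 0
  | succ t, ρ => t.evalN ρ + 1
  | add t u, ρ => t.evalN ρ + u.evalN ρ
  | mul t u, ρ => t.evalN ρ * u.evalN ρ

def fvB : ATerm → ℕ
  | var n => n + 1
  | zero => 0
  | succ t => t.fvB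
  | add t u => max t.fvB u.fvB
  | mul t u => max t.fvB u.fvB

/-- a Gödel numbering of terms. -/
def code : ATerm → ℕ
  | var n => Nat.pair 0 n
  | zero => Nat.pair 1 0
  | succ t => Nat.pair 2 t.code
  | add t u => Nat.pair 3 (Nat.pair t.code u.code)
  | mul t u => Nat.pair 4 (Nat.pair t.code u.code)

end ATerm

/-- the numeral of a natural number. -/
def numeral : ℕ → ATerm
  | 0 => .zero
  | n + 1 => .succ (numeral n)

/-- extend an environment by one value at index 0. -/
def econs {α : Sort*} (b : α) (ρ : ℕ → α) : ℕ → α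
  | 0 => b
  | n + 1 => ρ n

/-- first-order formulas of arithmetic (de Bruijn variables). -/
inductive AForm : Type
  | eq : ATerm → ATerm → AForm
  | lt : ATerm → ATerm → AForm
  | fal : AForm
  | and : AForm → AForm → AForm
  | or : AForm → AForm → AForm
  | imp : AForm → AForm → AForm
  | all : AForm → AForm
  | ex : AForm → AForm
  deriving DecidableEq

namespace AForm

def neg (A : AForm) : AForm := imp A fal

def iffA (A B : AForm) : AForm := and (imp A B) (imp B A)

def lift : AForm → ℕ → AForm
  | eq t u, d => eq (t.lift d) (u.lift d)
  | lt t u, d => lt (t.lift d) (u.lift d)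
  | fal, _ => fal
  | and A B, d => and (A.lift d) (B.lift d)
  | or A B, d => or (A.lift d) (B.lift d)
  | imp A B, d => imp (A.lift d) (B.lift d)
  | all A, d => all (A.lift (d + 1))
  | ex A, d => ex (A.lift (d + 1))

/-- capture-avoiding substitution of a term for variable `k` (instantiating a binder). -/
def subst : AForm → ℕ → ATerm → AForm
  | eq t u, k, s => eq (t.subst k s) (u.subst k s)
  | lt t u, k, s => lt (t.subst k s) (u.subst k s)
  | fal, _, _ => fal
  | and A B, k, s => and (A.subst k s) (B.subst k s)
  | or A B, k, s => or (A.subst k s) (B.subst k s)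
  | imp A B, k, s => imp (A.subst k s) (B.subst k s)
  | all A, k, s => all (A.subst (k + 1) (s.lift 0))
  | ex A, k, s => ex (A.subst (k + 1) (s.lift 0))

/-- non-binding substitution: replace the free variable `k` by `s`. -/
def substId : AForm → ℕ → ATerm → AForm
  | eq t u, k, s => eq (t.substId k s) (u.substId k s)
  | lt t u, k, s => lt (t.substId k s) (u.substId k s)
  | fal, _, _ => fal
  | and A B, k, s => and (A.substId k s) (B.substId k s)
  | or A B, k, s => or (A.substId k s) (B.substId k s)
  | imp A B, k, s => imp (A.substId k s) (B.substId k s)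
  | all A, k, s => all (A.substId (k + 1) (s.lift 0))
  | ex A, k, s => ex (A.substId (k + 1) (s.lift 0))

/-- all free variables have index < k. -/
def vlt : AForm → ℕ → Prop
  | eq t u, k => t.vlt k ∧ u.vlt k
  | lt t u, k => t.vlt k ∧ u.vlt k
  | fal, _ => True
  | and A B, k => A.vlt k ∧ B.vlt k
  | or A B, k => A.vlt k ∧ B.vlt k
  | imp A B, k => A.vlt k ∧ B.vlt k
  | all A, k => A.vlt (k + 1)
  | ex A, k => A.vlt (k + 1)

/-- a bound on the free variables of a formula. -/
def fvB : AForm → ℕ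
  | eq t u => max t.fvB u.fvB
  | lt t u => max t.fvB u.fvB
  | fal => 0
  | and A B => max A.fvB B.fvB
  | or A B => max A.fvB B.fvB
  | imp A B => max A.fvB B.fvB
  | all A => A.fvB - 1
  | ex A => A.fvB - 1

/-- classical (Tarskian) satisfaction in the standard model ℕ. -/
def SatN : AForm → (ℕ → ℕ) → Prop
  | eq t u, ρ => t.evalN ρ = u.evalN ρ
  | lt t u, ρ => t.evalN ρ < u.evalN ρ
  | fal, _ => False
  | and A B, ρ => A.SatN ρ ∧ B.SatN ρ
  | or A B, ρ => A.SatN ρ ∨ B.SatN ρ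
  | imp A B, ρ => A.SatN ρ → B.SatN ρ
  | all A, ρ => ∀ n : ℕ, A.SatN (econs n ρ)
  | ex A, ρ => ∃ n : ℕ, A.SatN (econs n ρ)

/-- a Gödel numbering of arithmetic formulas. -/
def code : AForm → ℕ
  | eq t u => Nat.pair 0 (Nat.pair t.code u.code)
  | lt t u => Nat.pair 1 (Nat.pair t.code u.code)
  | fal => Nat.pair 2 0
  | and A B => Nat.pair 3 (Nat.pair A.code B.code)
  | or A B => Nat.pair 4 (Nat.pair A.code B.code)
  | imp A B => Nat.pair 5 (Nat.pair A.code B.code)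
  | all A => Nat.pair 6 A.code
  | ex A => Nat.pair 7 A.code

end AForm

/-- Δ₀ formulas: only bounded quantifiers. -/
inductive Delta0 : AForm → Prop
  | eq (t u) : Delta0 (.eq t u)
  | lt (t u) : Delta0 (.lt t u)
  | fal : Delta0 .fal
  | and {A B} : Delta0 A → Delta0 B → Delta0 (.and A B)
  | or {A B} : Delta0 A → Delta0 B → Delta0 (.or A B)
  | imp {A B} : Delta0 A → Delta0 B → Delta0 (.imp A B)
  | ball (t : ATerm) {A} : Delta0 A → Delta0 (.all (.imp (.lt (.var 0) (t.lift 0)) A))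
  | bex (t : ATerm) {A} : Delta0 A → Delta0 (.ex (.and (.lt (.var 0) (t.lift 0)) A))

/-- Σ₁ formulas: existential quantifiers over a Δ₀ matrix. -/
inductive Sigma1 : AForm → Prop
  | of_delta0 {A} : Delta0 A → Sigma1 A
  | ex {A} : Sigma1 A → Sigma1 (.ex A)

/-- a Hilbert-style proof system for intuitionistic first-order logic with equality,
from a set `T` of (closed) non-logical axioms. -/
inductive Prf (T : AForm → Prop) : AForm → Prop
  | hyp {A} : T A → Prf T A
  | mp {A B} : Prf T (.imp A B) → Prf T A → Prf T B
  | gen {A} : Prf T A → Prf T (.all A)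
  | k (A B) : Prf T (.imp A (.imp B A))
  | s (A B C) : Prf T (.imp (.imp A (.imp B C)) (.imp (.imp A B) (.imp A C)))
  | pair (A B) : Prf T (.imp A (.imp B (.and A B)))
  | fst (A B) : Prf T (.imp (.and A B) A)
  | snd (A B) : Prf T (.imp (.and A B) B)
  | inl (A B) : Prf T (.imp A (.or A B))
  | inr (A B) : Prf T (.imp B (.or A B))
  | cases (A B C) : Prf T (.imp (.imp A C) (.imp (.imp B C) (.imp (.or A B) C)))
  | exfalso (A) : Prf T (.imp .fal A)
  | allE (A : AForm) (t : ATerm) : Prf T (.imp (.all A) (A.subst 0 t))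
  | allShift (A B : AForm) : Prf T (.imp (.all (.imp (B.lift 0) A)) (.imp B (.all A)))
  | exI (A : AForm) (t : ATerm) : Prf T (.imp (A.subst 0 t) (.ex A))
  | exE (A B : AForm) : Prf T (.imp (.all (.imp A (B.lift 0))) (.imp (.ex A) B))
  | eqRefl : Prf T (.all (.eq (.var 0) (.var 0)))
  | leibniz (A : AForm) : Prf T (.all (.all (.imp (.eq (.var 1) (.var 0))
      (.imp (((A.lift 1).lift 1).substId 0 (.var 1))
            (((A.lift 1).lift 1).substId 0 (.var 0))))))

/-- iterated universal quantification. -/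
def ucAux : ℕ → AForm → AForm
  | 0, A => A
  | k + 1, A => ucAux k (.all A)

/-- universal closure. -/
def uc (A : AForm) : AForm := ucAux A.fvB A

/-- the induction axiom for the formula A (induction on variable 0). -/
def indAx (A : AForm) : AForm :=
  uc (.imp (.and (A.subst 0 .zero) (.all (.imp A (A.substId 0 (.succ (.var 0))))))
      (.all A))

/-- the axioms Q1–Q8. -/
inductive QAx : AForm → Prop
  | q1 : QAx (.all (.imp (.eq (.succ (.var 0)) .zero) .fal))
  | q2 : QAx (.all (.all (.imp (.eq (.succ (.var 1)) (.succ (.var 0))) (.eq (.var 1) (.var 0)))))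
  | q3 : QAx (.all (.or (.eq (.var 0) .zero) (.ex (.eq (.succ (.var 0)) (.var 1)))))
  | q4 : QAx (.all (.eq (.add (.var 0) .zero) (.var 0)))
  | q5 : QAx (.all (.all (.eq (.add (.var 1) (.succ (.var 0))) (.succ (.add (.var 1) (.var 0))))))
  | q6 : QAx (.all (.eq (.mul (.var 0) .zero) .zero))
  | q7 : QAx (.all (.all (.eq (.mul (.var 1) (.succ (.var 0))) (.add (.mul (.var 1) (.var 0)) (.var 1)))))
  | q8 : QAx (.all (.all (AForm.iffA (.lt (.var 1) (.var 0))
      (.ex (.eq (.add (.var 2) (.succ (.var 0))) (.var 1))))))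

/-- the axioms of Heyting Arithmetic: Q1–Q8 and full induction. -/
def HAAx : AForm → Prop := fun A => QAx A ∨ ∃ B : AForm, A = indAx B

/-- provability in HA. -/
def HAProves : AForm → Prop := Prf HAAx

/-- interface for the standard arithmetized provability predicate `Prov_HA` of HA:
`Pr A` is the Σ₁ sentence `Prov_HA(⌜A⌝)`. -/
structure ProvPred where
  Pr : AForm → AForm
  sentence : ∀ A, (Pr A).vlt 0
  sigma1 : ∀ A, Sigma1 (Pr A)
  correct : ∀ A : AForm, ((Pr A).SatN (fun _ => 0) ↔ HAProves A)
  dNec : ∀ A, HAProves A → HAProves (Pr A)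
  dK : ∀ A B, HAProves (.imp (Pr (.imp A B)) (.imp (Pr A) (Pr B)))
  dSigma : ∀ A, Sigma1 A → A.vlt 0 → HAProves (.imp A (Pr A))
  dLob : ∀ A, HAProves (.imp (Pr (.imp (Pr A) A)) (Pr A))

/-- the arithmetical interpretation `σ_HA` of modal formulas determined by a
substitution `σ` and a provability predicate `Pr`. -/
def interp (Pr : AForm → AForm) (σ : ℕ → AForm) : Form → AForm
  | .var n => σ n
  | .bot => .fal
  | .and A B => .and (interp Pr σ A) (interp Pr σ B)
  | .or A B => .or (interp Pr σ A) (interp Pr σ B)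
  | .imp A B => .imp (interp Pr σ A) (interp Pr σ B)
  | .box A => Pr (interp Pr σ A)

/-- σ is an arithmetical substitution: it maps atomic variables to sentences. -/
def ArithSubst (σ : ℕ → AForm) : Prop := ∀ n, (σ n).vlt 0

/-- σ is a Σ₁-substitution: it maps atomic variables to Σ₁ sentences. -/
def Sigma1Subst (σ : ℕ → AForm) : Prop := ∀ n, Sigma1 (σ n) ∧ (σ n).vlt 0

/-! ## The theories HAₓ and indexed provability (for the refined Leivant principle) -/

/-- induction formulas of the special shape (A→B)→B with A, B ∈ Σ₁. -/
def shapeInd (A : AForm) : Prop := ∃ S Tf : AForm, Sigma1 S ∧ Sigma1 Tf ∧ A = .imp (.imp S Tf) Tf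

/-- the axioms of HAₓ: Q1-Q8, and induction restricted to formulas of the shape
(A→B)→B with A,B ∈ Σ₁ or with Gödel number ≤ x. -/
def HAxAx (x : ℕ) : AForm → Prop := fun A =>
  QAx A ∨ ∃ B : AForm, (shapeInd B ∨ B.code ≤ x) ∧ A = indAx B

/-- interface for the arithmetized bounded provability predicates `□ₓ`:
`PrB A` is the Σ₁ formula with free variable 0 expressing `Prov_{HA_{v₀}}(⌜A⌝)`, and
`PrBSub A` (for `A` with one free variable) is the Σ₁ formula with free variables 0, 1
expressing `Prov_{HA_{v₀}}(⌜A(v̇₁)⌝)`. -/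
structure BddProvPred where
  PrB : AForm → AForm
  PrBSub : AForm → AForm
  PrB_vlt : ∀ A, (PrB A).vlt 1
  PrB_sigma1 : ∀ A, Sigma1 (PrB A)
  PrB_correct : ∀ (A : AForm) (n : ℕ),
    ((PrB A).SatN (fun i => if i = 0 then n else 0) ↔ Prf (HAxAx n) A)
  PrBSub_vlt : ∀ A, (PrBSub A).vlt 2
  PrBSub_sigma1 : ∀ A, Sigma1 (PrBSub A)
  PrBSub_correct : ∀ (A : AForm) (n m : ℕ),
    ((PrBSub A).SatN (fun i => if i = 0 then n else m) ↔ Prf (HAxAx n) (A.subst 0 (numeral m)))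

/-! ## First-order Kripke models of HA -/

/-- a first-order Kripke model for the language of arithmetic over the frame `(W, le)`:
each node carries a classical structure, and the structure at a smaller node is a weak
substructure of the structure at a bigger one (realized as subsets of a common universe,
closed under the operations). -/
structure FOKripke (W : Type) (le : W → W → Prop) where
  U : Type
  dom : W → Set U
  zero : U
  succ : U → U
  add : U → U → U
  mul : U → U → U
  ltR : U → U → Prop
  dom_mono : ∀ {a b : W}, le a b → dom a ⊆ dom b
  zero_mem : ∀ a, zero ∈ dom a
  succ_mem : ∀ a x, x ∈ dom a → succ x ∈ dom a
  add_mem : ∀ a x y, x ∈ dom a → y ∈ dom a → add x y ∈ dom a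
  mul_mem : ∀ a x y, x ∈ dom a → y ∈ dom a → mul x y ∈ dom a

/-- evaluation of a term in a first-order Kripke model. -/
def tevalK {W : Type} {le : W → W → Prop} (M : FOKripke W le) (ρ : ℕ → M.U) : ATerm → M.U
  | .var n => ρ n
  | .zero => M.zero
  | .succ t => M.succ (tevalK M ρ t)
  | .add t u => M.add (tevalK M ρ t) (tevalK M ρ u)
  | .mul t u => M.mul (tevalK M ρ t) (tevalK M ρ u)

/-- the forcing relation of a first-order Kripke model. -/
def FOForces {W : Type} {le : W → W → Prop} (M : FOKripke W le) :
    AForm → W → (ℕ → M.U) → Prop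
  | .eq t u, _, ρ => tevalK M ρ t = tevalK M ρ u
  | .lt t u, _, ρ => M.ltR (tevalK M ρ t) (tevalK M ρ u)
  | .fal, _, _ => False
  | .and A B, w, ρ => FOForces M A w ρ ∧ FOForces M B w ρ
  | .or A B, w, ρ => FOForces M A w ρ ∨ FOForces M B w ρ
  | .imp A B, w, ρ => ∀ v, le w v → FOForces M A v ρ → FOForces M B v ρ
  | .all A, w, ρ => ∀ v, le w v → ∀ b ∈ M.dom v, FOForces M A v (econs b ρ)
  | .ex A, w, ρ => ∃ b ∈ M.dom w, FOForces M A w (econs b ρ)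

/-- the Kripke model forces all axioms of HA. -/
def ForcesHA {W : Type} {le : W → W → Prop} (M : FOKripke W le) : Prop :=
  ∀ A : AForm, HAAx A → ∀ w : W, FOForces M A w (fun _ => M.zero)

end PLHA

namespace PLHA

namespace BT

open Form

abbrev G := iGLProves

lemma G.ipc {A : Form} (h : IpcAx A) : G A := Proves.ipc h
lemma G.mp' {A B : Form} : G (.imp A B) → G A → G B := Proves.mp
lemma G.nec' {A : Form} (h : G A) : G (.box A) := Proves.nec rfl h
lemma G.k (A B : Form) : G (.imp (.box (.imp A B)) (.imp (.box A) (.box B))) := Proves.ax (GLAx.k A B)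
lemma G.four (A : Form) : G (.imp (.box A) (.box (.box A))) := Proves.ax (GLAx.four A)
lemma G.lob (A : Form) : G (.imp (.box (.imp (.box A) A)) (.box A)) := Proves.ax (GLAx.lob A)

lemma impId (A : Form) : G (.imp A A) :=
  G.mp' (G.mp' (G.ipc (IpcAx.a2 A (.imp A A) A)) (G.ipc (IpcAx.a1 A (.imp A A))))
    (G.ipc (IpcAx.a1 A A))

inductive Der (Γ : List Form) : Form → Prop
  | hyp {A} : A ∈ Γ → Der Γ A
  | thm {A} : G A → Der Γ A
  | mp {A B} : Der Γ (.imp A B) → Der Γ A → Der Γ B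

lemma ded {Γ : List Form} {A B : Form} (h : Der (A :: Γ) B) : Der Γ (.imp A B) := by
  induction h with
  | @hyp C m =>
    rcases List.mem_cons.1 m with rfl | m
    · exact Der.thm (impId _)
    · exact Der.mp (Der.thm (G.ipc (IpcAx.a1 C A))) (Der.hyp m)
  | @thm C t => exact Der.mp (Der.thm (G.ipc (IpcAx.a1 C A))) (Der.thm t)
  | @mp C D _ _ ih1 ih2 =>
    exact Der.mp (Der.mp (Der.thm (G.ipc (IpcAx.a2 A C D))) ih1) ih2

lemma der_thm {A : Form} (h : Der [] A) : G A := by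
  induction h with
  | hyp m => simp at m
  | thm t => exact t
  | mp _ _ ih1 ih2 => exact G.mp' ih1 ih2

lemma pairD {Γ : List Form} {A B : Form} (h1 : Der Γ A) (h2 : Der Γ B) : Der Γ (.and A B) :=
  Der.mp (Der.mp (Der.thm (G.ipc (IpcAx.a3 A B))) h1) h2

lemma fstD {Γ : List Form} {A B : Form} (h : Der Γ (.and A B)) : Der Γ A :=
  Der.mp (Der.thm (G.ipc (IpcAx.a4 A B))) h

lemma sndD {Γ : List Form} {A B : Form} (h : Der Γ (.and A B)) : Der Γ B :=
  Der.mp (Der.thm (G.ipc (IpcAx.a5 A B))) h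

lemma nec_imp {A B : Form} (h : G (.imp A B)) : G (.imp (.box A) (.box B)) :=
  G.mp' (G.k A B) (G.nec' h)

lemma impTrans {A B C : Form} (h1 : G (.imp A B)) (h2 : G (.imp B C)) : G (.imp A C) :=
  der_thm (ded (Der.mp (Der.thm h2) (Der.mp (Der.thm h1) (Der.hyp (List.mem_singleton.2 rfl)))))

lemma der_box {Γ : List Form} {B : Form}
    (st : ∀ F ∈ Γ, G (.imp F (.box F))) (h : Der Γ B) : Der Γ (.box B) := by
  induction h with
  | hyp m => exact Der.mp (Der.thm (st _ m)) (Der.hyp m)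
  | thm t => exact Der.thm (G.nec' t)
  | mp _ _ ih1 ih2 => exact Der.mp (Der.mp (Der.thm (G.k _ _)) ih1) ih2

lemma der_boxdot {Γ : List Form} {B : Form}
    (st : ∀ F ∈ Γ, G (.imp F (.box F))) (h : Der Γ B) : Der Γ (Form.boxdot B) :=
  pairD h (der_box st h)

lemma stable_boxdot (X : Form) : G ((Form.boxdot X).imp (.box (Form.boxdot X))) := by
  have h0 : Der [Form.boxdot X] (Form.boxdot X) := Der.hyp (List.mem_singleton.2 rfl)
  have bx : Der [Form.boxdot X] (.box X) := sndD h0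
  have bbx : Der [Form.boxdot X] (.box (.box X)) := Der.mp (Der.thm (G.four X)) bx
  have d1 : Der [Form.boxdot X] (.box (.imp (.box X) (.and X (.box X)))) :=
    Der.mp (Der.thm (nec_imp (G.ipc (IpcAx.a3 X (.box X))))) bx
  have d2 : Der [Form.boxdot X] (.box (.and X (.box X))) :=
    Der.mp (Der.mp (Der.thm (G.k (.box X) (.and X (.box X)))) d1) bbx
  exact der_thm (ded d2)

lemma box_elim (Z : Form) : G (.imp (.box (Form.boxdot Z)) (.box Z)) :=
  nec_imp (G.ipc (IpcAx.a4 Z (.box Z)))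

lemma stable (A : Form) : G ((boxTr A).imp (.box (boxTr A))) := by
  induction A with
  | var n => exact stable_boxdot _
  | bot => exact stable_boxdot _
  | and A B ihA ihB =>
    have h0 : Der [boxTr (.and A B)] (.and (boxTr A) (boxTr B)) :=
      Der.hyp (List.mem_singleton.2 rfl)
    have bta : Der [boxTr (.and A B)] (.box (boxTr A)) := Der.mp (Der.thm ihA) (fstD h0)
    have btb : Der [boxTr (.and A B)] (.box (boxTr B)) := Der.mp (Der.thm ihB) (sndD h0)
    have d1 : Der [boxTr (.and A B)] (.box (.imp (boxTr B) (.and (boxTr A) (boxTr B)))) :=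
      Der.mp (Der.thm (nec_imp (G.ipc (IpcAx.a3 (boxTr A) (boxTr B))))) bta
    have d2 : Der [boxTr (.and A B)] (.box (.and (boxTr A) (boxTr B))) :=
      Der.mp (Der.mp (Der.thm (G.k (boxTr B) (.and (boxTr A) (boxTr B)))) d1) btb
    exact der_thm (ded d2)
  | or A B ihA ihB =>
    have h1 : G (.imp (boxTr A) (.box (.or (boxTr A) (boxTr B)))) :=
      impTrans ihA (nec_imp (G.ipc (IpcAx.a6 (boxTr A) (boxTr B))))
    have h2 : G (.imp (boxTr B) (.box (.or (boxTr A) (boxTr B)))) :=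
      impTrans ihB (nec_imp (G.ipc (IpcAx.a7 (boxTr A) (boxTr B))))
    exact G.mp' (G.mp' (G.ipc (IpcAx.a8 (boxTr A) (boxTr B) _)) h1) h2
  | imp A B ihA ihB => exact stable_boxdot _
  | box A ih => exact G.four (boxTr A)

lemma provBoxdot {X : Form} (h : G X) : G (Form.boxdot X) :=
  G.mp' (G.mp' (G.ipc (IpcAx.a3 X (.box X))) h) (G.nec' h)

lemma mem1 {A : Form} : A ∈ [A] := List.mem_singleton.2 rfl

end BT

end PLHA

namespace PLHA


open BT in
/-- iGL is closed under the box translation: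
if iGL ⊢ A then iGL ⊢ A^□. -/
theorem iGL_closed_under_boxTr (A : Form) (h : iGLProves A) : iGLProves (boxTr A) := by
  induction h with
  | @ax F hax =>
    cases hax with
    | k X Y =>
      simp only [boxTr]
      apply provBoxdot
      apply der_thm; apply ded
      have hH : Der [Form.box (Form.boxdot (.imp (boxTr X) (boxTr Y)))]
          (Form.box (Form.boxdot (.imp (boxTr X) (boxTr Y)))) := Der.hyp mem1
      have d1 : Der [Form.box (Form.boxdot (.imp (boxTr X) (boxTr Y)))]
          (Form.box (.imp (boxTr X) (boxTr Y))) :=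
        Der.mp (Der.thm (box_elim _)) hH
      have d2 : Der [Form.box (Form.boxdot (.imp (boxTr X) (boxTr Y)))]
          (.imp (.box (boxTr X)) (.box (boxTr Y))) :=
        Der.mp (Der.thm (G.k (boxTr X) (boxTr Y))) d1
      refine der_boxdot ?_ d2
      intro F hF; simp only [List.mem_singleton] at hF; subst hF
      exact G.four _
    | four X =>
      simp only [boxTr]
      exact provBoxdot (G.four (boxTr X))
    | lob X =>
      simp only [boxTr]
      exact provBoxdot (impTrans (box_elim _) (G.lob (boxTr X)))
  | @ipc F hax =>
    cases hax with
    | a1 X Y =>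
      simp only [boxTr]
      apply provBoxdot; apply der_thm; apply ded
      refine der_boxdot ?_ (ded (Der.hyp (by simp)))
      intro F hF; simp only [List.mem_singleton] at hF; subst hF; exact stable X
    | a2 X Y Z =>
      simp only [boxTr]
      apply provBoxdot; apply der_thm; apply ded
      set H1 : Form := Form.boxdot (.imp (boxTr X) (Form.boxdot (.imp (boxTr Y) (boxTr Z)))) with hH1
      set H2 : Form := Form.boxdot (.imp (boxTr X) (boxTr Y)) with hH2
      refine der_boxdot ?_ (ded ?_)
      · intro F hF; simp only [List.mem_singleton] at hF; subst hF; exact stable_boxdot _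
      refine der_boxdot ?_ (ded ?_)
      · intro F hF
        simp only [List.mem_cons, List.mem_singleton, List.not_mem_nil, or_false] at hF
        rcases hF with rfl | rfl
        · exact stable_boxdot _
        · exact stable_boxdot _
      -- Der [boxTr X, H2, H1] (boxTr Z)
      have hx : Der [boxTr X, H2, H1] (boxTr X) := Der.hyp (by simp)
      have hh1 : Der [boxTr X, H2, H1] H1 := Der.hyp (by simp)
      have hh2 : Der [boxTr X, H2, H1] H2 := Der.hyp (by simp)
      have f1 : Der [boxTr X, H2, H1]
          (.imp (boxTr X) (Form.boxdot (.imp (boxTr Y) (boxTr Z)))) := fstD hh1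
      have g : Der [boxTr X, H2, H1] (.imp (boxTr Y) (boxTr Z)) := fstD (Der.mp f1 hx)
      have ty : Der [boxTr X, H2, H1] (boxTr Y) := Der.mp (fstD hh2) hx
      exact Der.mp g ty
    | a3 X Y =>
      simp only [boxTr]
      apply provBoxdot; apply der_thm; apply ded
      refine der_boxdot ?_ (ded (pairD (Der.hyp (by simp)) (Der.hyp (by simp))))
      intro F hF; simp only [List.mem_singleton] at hF; subst hF; exact stable X
    | a4 X Y =>
      simp only [boxTr]
      exact provBoxdot (G.ipc (IpcAx.a4 (boxTr X) (boxTr Y)))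
    | a5 X Y =>
      simp only [boxTr]
      exact provBoxdot (G.ipc (IpcAx.a5 (boxTr X) (boxTr Y)))
    | a6 X Y =>
      simp only [boxTr]
      exact provBoxdot (G.ipc (IpcAx.a6 (boxTr X) (boxTr Y)))
    | a7 X Y =>
      simp only [boxTr]
      exact provBoxdot (G.ipc (IpcAx.a7 (boxTr X) (boxTr Y)))
    | a8 X Y Z =>
      simp only [boxTr]
      apply provBoxdot; apply der_thm; apply ded
      set H1 : Form := Form.boxdot (.imp (boxTr X) (boxTr Z)) with hH1
      set H2 : Form := Form.boxdot (.imp (boxTr Y) (boxTr Z)) with hH2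
      refine der_boxdot ?_ (ded ?_)
      · intro F hF; simp only [List.mem_singleton] at hF; subst hF; exact stable_boxdot _
      refine der_boxdot ?_ (ded ?_)
      · intro F hF
        simp only [List.mem_cons, List.mem_singleton, List.not_mem_nil, or_false] at hF
        rcases hF with rfl | rfl
        · exact stable_boxdot _
        · exact stable_boxdot _
      -- Der [or tX tY, H2, H1] (boxTr Z)
      have hor : Der [Form.or (boxTr X) (boxTr Y), H2, H1] (.or (boxTr X) (boxTr Y)) :=
        Der.hyp (by simp)
      have hh1 : Der [Form.or (boxTr X) (boxTr Y), H2, H1] H1 := Der.hyp (by simp)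
      have hh2 : Der [Form.or (boxTr X) (boxTr Y), H2, H1] H2 := Der.hyp (by simp)
      exact Der.mp (Der.mp (Der.mp (Der.thm (G.ipc (IpcAx.a8 (boxTr X) (boxTr Y) (boxTr Z))))
        (fstD hh1)) (fstD hh2)) hor
    | a9 X =>
      simp only [boxTr]
      exact provBoxdot (impTrans (G.ipc (IpcAx.a4 Form.bot (.box .bot)))
        (G.ipc (IpcAx.a9 (boxTr X))))
  | @mp X Y _ _ ih1 ih2 =>
    simp only [boxTr] at ih1
    exact G.mp' (G.mp' (G.ipc (IpcAx.a4 _ _)) ih1) ih2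
  | @nec X hu _ ih =>
    simp only [boxTr]
    exact G.nec' ih


end PLHA
end

section
/- For every modal proposition A, if LC ⊢ A then iGL ⊢ A^□. -/
namespace PLHA

/-!
Every box translation `A^□` is self-complete over iK4, i.e. `⊢ A^□ → □A^□`, and from
self-complete hypotheses anything derivable is also derivable under a box. So in contexts of
self-complete formulas the translated implication `⊡(X → Y)` obeys the usual introduction rule,
which makes the translations of the IPC axioms derivable. The translations of K, 4 and Löb are
(consequences of) instances of the same schemas, the translation of CP is self-completeness, and
modus ponens and necessitation commute with the translation.
-/

section Derivations

variable {Ax : Form → Prop} {u : Bool}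

theorem Proves.imp_self (A : Form) : Proves Ax u (.imp A A) :=
  ((Proves.ipc (IpcAx.a2 A (.imp A A) A)).mp (Proves.ipc (IpcAx.a1 A (.imp A A)))).mp
    (Proves.ipc (IpcAx.a1 A A))

inductive Derives (Ax : Form → Prop) (u : Bool) (Γ : List Form) : Form → Prop
  | thm {A} : Proves Ax u A → Derives Ax u Γ A
  | hyp {A} : A ∈ Γ → Derives Ax u Γ A
  | mp {A B} : Derives Ax u Γ (.imp A B) → Derives Ax u Γ A → Derives Ax u Γ B

namespace Derives

variable {Γ : List Form} {A B C : Form}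

theorem imp_intro (h : Derives Ax u (A :: Γ) B) : Derives Ax u Γ (.imp A B) := by
  induction h with
  | thm h => exact .mp (.thm (.ipc (.a1 _ _))) (.thm h)
  | hyp hm =>
      rcases List.mem_cons.mp hm with rfl | hm
      · exact .thm (Proves.imp_self _)
      · exact .mp (.thm (.ipc (.a1 _ _))) (.hyp hm)
  | mp _ _ ihAB ihA => exact .mp (.mp (.thm (.ipc (.a2 _ _ _))) ihAB) ihA

theorem proves_of_nil (h : Derives Ax u [] A) : Proves Ax u A := by
  induction h with
  | thm h => exact h
  | hyp h => exact absurd h List.not_mem_nil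
  | mp _ _ ihAB ihA => exact ihAB.mp ihA

theorem and_intro (hA : Derives Ax u Γ A) (hB : Derives Ax u Γ B) : Derives Ax u Γ (.and A B) :=
  .mp (.mp (.thm (.ipc (.a3 _ _))) hA) hB

theorem and_left (h : Derives Ax u Γ (.and A B)) : Derives Ax u Γ A :=
  .mp (.thm (.ipc (.a4 _ _))) h

theorem and_right (h : Derives Ax u Γ (.and A B)) : Derives Ax u Γ B :=
  .mp (.thm (.ipc (.a5 _ _))) h

theorem or_elim (h : Derives Ax u Γ (.or A B)) (hA : Derives Ax u (A :: Γ) C)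
    (hB : Derives Ax u (B :: Γ) C) : Derives Ax u Γ C :=
  .mp (.mp (.mp (.thm (.ipc (.a8 _ _ _))) hA.imp_intro) hB.imp_intro) h

end Derives

end Derivations

section BoxTranslation

variable {Ax : Form → Prop} {Γ : List Form} {X Y : Form}

def SelfComplete (Ax : Form → Prop) (X : Form) : Prop := Proves Ax true (.imp X (.box X))

namespace Derives

theorem box_mono (hK4 : K4Ax ≤ Ax) (hXY : Proves Ax true (.imp X Y))
    (h : Derives Ax true Γ (.box X)) : Derives Ax true Γ (.box Y) :=
  .mp (.mp (.thm (.ax (hK4 _ (.k X Y)))) (.thm (.nec rfl hXY))) h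

theorem box_mp (hK4 : K4Ax ≤ Ax) (hXY : Derives Ax true Γ (.box (.imp X Y)))
    (hX : Derives Ax true Γ (.box X)) : Derives Ax true Γ (.box Y) :=
  .mp (.mp (.thm (.ax (hK4 _ (.k X Y)))) hXY) hX

theorem box_of_selfComplete (hK4 : K4Ax ≤ Ax) (hΓ : ∀ Z ∈ Γ, SelfComplete Ax Z)
    (h : Derives Ax true Γ X) : Derives Ax true Γ (.box X) := by
  induction h with
  | thm h => exact .thm (.nec rfl h)
  | hyp hm => exact .mp (.thm (hΓ _ hm)) (.hyp hm)
  | mp _ _ ihXY ihX => exact box_mp hK4 ihXY ihX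

theorem boxdot_imp_intro (hK4 : K4Ax ≤ Ax) (hΓ : ∀ Z ∈ Γ, SelfComplete Ax Z)
    (h : Derives Ax true (X :: Γ) Y) : Derives Ax true Γ (Form.boxdot (.imp X Y)) :=
  and_intro h.imp_intro (box_of_selfComplete hK4 hΓ h.imp_intro)

theorem boxdot_imp_elim (hXY : Derives Ax true Γ (Form.boxdot (.imp X Y)))
    (hX : Derives Ax true Γ X) : Derives Ax true Γ Y :=
  .mp hXY.and_left hX

end Derives

theorem selfComplete_boxdot (hK4 : K4Ax ≤ Ax) (X : Form) : SelfComplete Ax (Form.boxdot X) := by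
  refine (Derives.imp_intro ?_).proves_of_nil
  have hX : Derives Ax true [Form.boxdot X] (.box X) := (Derives.hyp (.head _)).and_right
  exact .box_mp hK4 (.box_mono hK4 (.ipc (.a3 _ _)) hX) (.mp (.thm (.ax (hK4 _ (.four X)))) hX)

theorem selfComplete_boxTr (hK4 : K4Ax ≤ Ax) (A : Form) : SelfComplete Ax (boxTr A) := by
  induction A with
  | var n => exact selfComplete_boxdot hK4 _
  | bot => exact selfComplete_boxdot hK4 _
  | imp A B _ _ => exact selfComplete_boxdot hK4 _
  | box A _ => exact .ax (hK4 _ (.four _))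
  | and A B ihA ihB =>
      refine (Derives.imp_intro ?_).proves_of_nil
      have hAB : Derives Ax true [.and (boxTr A) (boxTr B)] (.and (boxTr A) (boxTr B)) :=
        .hyp (.head _)
      exact .box_mp hK4 (.box_mono hK4 (.ipc (.a3 _ _)) (.mp (.thm ihA) hAB.and_left))
        (.mp (.thm ihB) hAB.and_right)
  | or A B ihA ihB =>
      refine (Derives.imp_intro (.or_elim (.hyp (.head _)) ?_ ?_)).proves_of_nil
      · exact .box_mono hK4 (.ipc (.a6 _ _)) (.mp (.thm ihA) (.hyp (.head _)))
      · exact .box_mono hK4 (.ipc (.a7 _ _)) (.mp (.thm ihB) (.hyp (.head _)))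

theorem proves_boxTr_of_ipcAx (hK4 : K4Ax ≤ Ax) {F : Form} (h : IpcAx F) :
    Proves Ax true (boxTr F) := by
  have sc := selfComplete_boxTr hK4
  refine Derives.proves_of_nil ?_
  cases h with
  | a1 A B =>
      exact .boxdot_imp_intro hK4 (by simp) <| .boxdot_imp_intro hK4 (by simp [sc]) <|
        .hyp (.tail _ (.head _))
  | a2 A B C =>
      refine .boxdot_imp_intro hK4 (by simp) <| .boxdot_imp_intro hK4 (by simp [sc]) <|
        .boxdot_imp_intro hK4 (by simp [sc]) ?_
      exact .boxdot_imp_elim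
        (.boxdot_imp_elim (.hyp (.tail _ (.tail _ (.head _)))) (.hyp (.head _)))
        (.boxdot_imp_elim (.hyp (.tail _ (.head _))) (.hyp (.head _)))
  | a3 A B =>
      exact .boxdot_imp_intro hK4 (by simp) <| .boxdot_imp_intro hK4 (by simp [sc]) <|
        .and_intro (.hyp (.tail _ (.head _))) (.hyp (.head _))
  | a4 A B => exact .boxdot_imp_intro hK4 (by simp) (Derives.hyp (.head _)).and_left
  | a5 A B => exact .boxdot_imp_intro hK4 (by simp) (Derives.hyp (.head _)).and_right
  | a6 A B => exact .boxdot_imp_intro hK4 (by simp) (.mp (.thm (.ipc (.a6 _ _))) (.hyp (.head _)))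
  | a7 A B => exact .boxdot_imp_intro hK4 (by simp) (.mp (.thm (.ipc (.a7 _ _))) (.hyp (.head _)))
  | a8 A B C =>
      refine .boxdot_imp_intro hK4 (by simp) <| .boxdot_imp_intro hK4 (by simp [sc]) <|
        .boxdot_imp_intro hK4 (by simp [sc]) <| .or_elim (.hyp (.head _)) ?_ ?_
      · exact .boxdot_imp_elim (.hyp (.tail _ (.tail _ (.tail _ (.head _))))) (.hyp (.head _))
      · exact .boxdot_imp_elim (.hyp (.tail _ (.tail _ (.head _)))) (.hyp (.head _))
  | a9 A =>
      exact .boxdot_imp_intro hK4 (by simp) <|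
        .mp (.thm (.ipc (.a9 _))) (Derives.hyp (.head _)).and_left

end BoxTranslation

theorem k4Ax_le_glAx : K4Ax ≤ GLAx := by
  intro F h
  cases h with
  | k A B => exact .k A B
  | four A => exact .four A

theorem iGLProves_boxTr_of_glAx {F : Form} (h : GLAx F) : iGLProves (boxTr F) := by
  have hK4 := k4Ax_le_glAx
  refine Derives.proves_of_nil ?_
  cases h with
  | k A B =>
      exact .boxdot_imp_intro hK4 (by simp) <|
        .boxdot_imp_intro hK4 (by simp [selfComplete_boxTr hK4]) <|
          .box_mp hK4 (.box_mono hK4 (.ipc (.a4 _ _)) (.hyp (.tail _ (.head _)))) (.hyp (.head _))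
  | four A => exact .boxdot_imp_intro hK4 (by simp) (.mp (.thm (.ax (.four _))) (.hyp (.head _)))
  | lob A =>
      exact .boxdot_imp_intro hK4 (by simp) <|
        .mp (.thm (.ax (.lob _))) (.box_mono hK4 (.ipc (.a4 _ _)) (.hyp (.head _)))

theorem iGLProves_boxTr_cp (A : Form) : iGLProves (boxTr (.imp A (.box A))) :=
  Derives.proves_of_nil <| .boxdot_imp_intro k4Ax_le_glAx (by simp) <|
    .mp (.thm (selfComplete_boxTr k4Ax_le_glAx A)) (.hyp (.head _))

/-- if LC ⊢ A then iGL ⊢ A^□. -/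
theorem LC_to_iGL_boxTr (A : Form) (h : LCProves A) : iGLProves (boxTr A) := by
  induction h with
  | ax hF =>
      rcases hF with hGL | ⟨B, rfl⟩
      · exact iGLProves_boxTr_of_glAx hGL
      · exact iGLProves_boxTr_cp B
  | ipc hF => exact proves_boxTr_of_ipcAx k4Ax_le_glAx hF
  | mp _ _ ihAB ihA => exact Derives.proves_of_nil (.boxdot_imp_elim (.thm ihAB) (.thm ihA))
  | nec _ _ ih => exact .nec rfl ih

end PLHA
end
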